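/- arXiv:0908.2516 — 3 statements merged into one kernel-verified Lean document; each statement's English description precedes it below -/
import Mathlib

section
/- For every even number n ≥ 2, there is no balanced doubly arithmetic triangle DAT(a,d1,d2,m) in Z/nZ for any a, d1, d2 in Z/nZ and any m ≥ 1 (with nonempty triangle). -/
def DAT (n : ℕ) (a d1 d2 : ZMod n) (m : ℕ) : Multiset (ZMod n) :=
  ((Finset.range m ×ˢ Finset.range m).filter (fun p => p.1 + p.2 < m)).val.map
    (fun p => a + p.1 • d1 + p.2 • d2)

def IsBalanced {n : ℕ} (M : Multiset (ZMod n)) : Prop :=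
  ∀ x y : ZMod n, M.count x = M.count y

/-!
For even `n` the sign `x ↦ (-1) ^ x.val` is a nontrivial additive character of `ZMod n`, so its
sum over a balanced multiset vanishes. Over `DAT n a d1 d2 m` this sum factors as `±1` times
`∑_{i + j < m} e₁ ^ i * e₂ ^ j` with `e₁, e₂ = ±1`, and splitting the triangle into antidiagonals
shows that this integer is never zero.
-/

open Finset

def triangle (m : ℕ) : Finset (ℕ × ℕ) :=
  (range m ×ˢ range m).filter fun p => p.1 + p.2 < m

theorem sum_triangle {M : Type*} [AddCommMonoid M] (m : ℕ) (f : ℕ × ℕ → M) :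
    ∑ p ∈ triangle m, f p = ∑ k ∈ range m, ∑ p ∈ antidiagonal k, f p := by
  rw [← sum_fiberwise_of_maps_to (s := triangle m) (t := range m) (g := fun p => p.1 + p.2)
    (fun p hp => mem_range.2 (mem_filter.1 hp).2) f]
  refine sum_congr rfl fun k hk => sum_congr ?_ fun _ _ => rfl
  ext ⟨i, j⟩
  simp only [triangle, mem_filter, mem_product, mem_range, HasAntidiagonal.mem_antidiagonal] at hk ⊢
  omega

theorem four_mul_sum_range_neg_one_pow_mul_succ (m : ℕ) :
    4 * ∑ k ∈ range m, (-1 : ℤ) ^ k * ((k : ℤ) + 1) = 1 - (-1) ^ m * (2 * (m : ℤ) + 1) := by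
  induction m with
  | zero => simp
  | succ m ih =>
    rw [sum_range_succ, mul_add, ih, pow_succ]
    push_cast
    ring

theorem sum_triangle_neg_one_pow_ne_zero {m : ℕ} (hm : 0 < m) :
    ∑ p ∈ triangle m, (-1 : ℤ) ^ p.1 * (-1) ^ p.2 ≠ 0 := by
  have hdiag (k : ℕ) :
      ∑ p ∈ antidiagonal k, (-1 : ℤ) ^ p.1 * (-1) ^ p.2 = (-1) ^ k * ((k : ℤ) + 1) := by
    rw [sum_congr rfl fun p hp => by rw [← pow_add, HasAntidiagonal.mem_antidiagonal.1 hp],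
      sum_const, Nat.card_antidiagonal, nsmul_eq_mul]
    push_cast
    ring
  intro h
  rw [sum_triangle, sum_congr rfl fun k _ => hdiag k] at h
  have h4 := four_mul_sum_range_neg_one_pow_mul_succ m
  rw [h, mul_zero, eq_comm, sub_eq_zero] at h4
  rcases neg_one_pow_eq_or ℤ m with h1 | h1 <;> rw [h1] at h4 <;> omega

theorem one_le_sum_range_of_nonneg {f : ℕ → ℤ} {m : ℕ} (hm : 0 < m) (hf : ∀ k, 0 ≤ f k)
    (hf0 : f 0 = 1) : 1 ≤ ∑ k ∈ range m, f k :=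
  hf0 ▸ single_le_sum (fun k _ => hf k) (mem_range.2 hm)

theorem sum_antidiagonal_neg_one_pow_nonneg (k : ℕ) :
    0 ≤ ∑ p ∈ antidiagonal k, (-1 : ℤ) ^ p.1 := by
  rw [Nat.sum_antidiagonal_eq_sum_range_succ_mk, neg_one_geom_sum]
  split_ifs <;> norm_num

theorem sum_triangle_sign_ne_zero {e₁ e₂ : ℤ} (he₁ : e₁ = 1 ∨ e₁ = -1) (he₂ : e₂ = 1 ∨ e₂ = -1)
    {m : ℕ} (hm : 0 < m) : ∑ p ∈ triangle m, e₁ ^ p.1 * e₂ ^ p.2 ≠ 0 := by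
  rcases he₁ with rfl | rfl <;> rcases he₂ with rfl | rfl
  · have hcard : 0 < #(triangle m) := card_pos.2 ⟨(0, 0), by simpa [triangle] using hm⟩
    simp only [one_pow, mul_one, sum_const, nsmul_eq_mul]
    exact_mod_cast hcard.ne'
  · rw [sum_triangle]
    refine ne_of_gt (one_le_sum_range_of_nonneg hm (fun k => ?_) ?_)
    · rw [← Nat.sum_antidiagonal_swap]
      simpa using sum_antidiagonal_neg_one_pow_nonneg k
    · simp
  · rw [sum_triangle]
    refine ne_of_gt (one_le_sum_range_of_nonneg hm (fun k => ?_) ?_)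
    · simpa using sum_antidiagonal_neg_one_pow_nonneg k
    · simp
  · exact sum_triangle_neg_one_pow_ne_zero hm

theorem sum_map_addChar_DAT {n : ℕ} {R : Type*} [CommRing R] (ψ : AddChar (ZMod n) R)
    (a d1 d2 : ZMod n) (m : ℕ) :
    ((DAT n a d1 d2 m).map ψ).sum = ψ a * ∑ p ∈ triangle m, ψ d1 ^ p.1 * ψ d2 ^ p.2 := by
  rw [DAT, Multiset.map_map, mul_sum]
  refine sum_congr rfl fun p _ => ?_
  simp only [Function.comp_apply, AddChar.map_add_eq_mul, AddChar.map_nsmul_eq_pow, mul_assoc]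

section ZModCharacters

variable {n : ℕ} [NeZero n]

theorem IsBalanced.sum_map_eq_count_nsmul_sum {R : Type*} [AddCommMonoid R]
    {M : Multiset (ZMod n)} (hM : IsBalanced M) (f : ZMod n → R) (a : ZMod n) :
    (M.map f).sum = M.count a • ∑ x, f x := by
  rw [sum_multiset_map_count, smul_sum]
  refine (sum_subset (subset_univ _) fun x _ hx => ?_).trans (sum_congr rfl fun x _ => ?_)
  · rw [Multiset.count_eq_zero_of_notMem (mt Multiset.mem_toFinset.2 hx), zero_smul]
  · rw [hM x a]

theorem IsBalanced.sum_map_addChar_eq_zero {R : Type*} [CommRing R] [IsDomain R]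
    {M : Multiset (ZMod n)} (hM : IsBalanced M) {ψ : AddChar (ZMod n) R} (hψ : ψ ≠ 1) :
    (M.map ψ).sum = 0 := by
  rw [hM.sum_map_eq_count_nsmul_sum ψ 0, AddChar.sum_eq_zero_of_ne_one hψ, smul_zero]

/-- Well defined because `2 ∣ n`: reducing `x.val + y.val` modulo `n` does not change its parity. -/
def parityChar (hn : Even n) : AddChar (ZMod n) ℤ where
  toFun x := (-1) ^ x.val
  map_zero_eq_one' := by simp
  map_add_eq_mul' x y := by
    rw [ZMod.val_add, ← pow_add, neg_one_pow_eq_pow_mod_two,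
      Nat.mod_mod_of_dvd _ hn.two_dvd, ← neg_one_pow_eq_pow_mod_two]

theorem parityChar_apply (hn : Even n) (x : ZMod n) : parityChar hn x = (-1) ^ x.val := rfl

theorem parityChar_ne_one (hn : Even n) : parityChar hn ≠ 1 := by
  refine AddChar.ne_one_iff.2 ⟨1, ?_⟩
  rw [parityChar_apply, ZMod.val_one'' (by rintro rfl; exact Nat.not_even_one hn)]
  decide

theorem parityChar_eq_one_or_eq_neg_one (hn : Even n) (x : ZMod n) :
    parityChar hn x = 1 ∨ parityChar hn x = -1 :=
  neg_one_pow_eq_or ℤ x.val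

end ZModCharacters

theorem stmt1 (n : ℕ) (hn : 2 ≤ n) (hne : Even n) (a d1 d2 : ZMod n) (m : ℕ) (hm : 0 < m) :
    ¬ IsBalanced (DAT n a d1 d2 m) := by
  intro hbal
  have : NeZero n := ⟨by omega⟩
  have hzero := hbal.sum_map_addChar_eq_zero (parityChar_ne_one hne)
  rw [sum_map_addChar_DAT, parityChar_apply] at hzero
  exact mul_ne_zero (pow_ne_zero _ (by norm_num)) (sum_triangle_sign_ne_zero
    (parityChar_eq_one_or_eq_neg_one hne d1) (parityChar_eq_one_or_eq_neg_one hne d2) hm) hzero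
end

section
/- Let n be an odd number, d invertible in Z/nZ, a ∈ Z/nZ, and S = IAP((a,-d,d-a),(d,-2d,d)) in Z/nZ. Then for every non-negative integer i, the derived sequences satisfy: ∂^{3i}S = (-1)^i · IAP((a-id, -(i+1)d, (2i+1)d - a), (d,-2d,d)), ∂^{3i+1}S = (-1)^i · IAP((a-(2i+1)d, id-a, (i+2)d), (-d,-d,2d)), and ∂^{3i+2}S = (-1)^i · IAP((-(i+1)d, (2i+2)d - a, a - id), (-2d,d,d)). In particular ∂^{3n}S = -S. -/
def IAP3 {G : Type*} [AddCommGroup G] (a0 a1 a2 d0 d1 d2 : G) : ℤ → G :=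
  fun j => if j % 3 = 0 then a0 + (j / 3) • d0
    else if j % 3 = 1 then a1 + (j / 3) • d1
    else a2 + (j / 3) • d2

def orbit {G : Type*} [AddCommGroup G] (S : ℤ → G) : ℕ → ℤ → G
  | 0 => S
  | i+1 => fun j => orbit S i j + orbit S i (j+1)

lemma IAP3_congr {G : Type*} [AddCommGroup G] {a0 a1 a2 d0 d1 d2 b0 b1 b2 e0 e1 e2 : G}
    (h0 : a0 = b0) (h1 : a1 = b1) (h2 : a2 = b2)
    (g0 : d0 = e0) (g1 : d1 = e1) (g2 : d2 = e2) :
    IAP3 a0 a1 a2 d0 d1 d2 = IAP3 b0 b1 b2 e0 e1 e2 := by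
  subst h0 h1 h2 g0 g1 g2; rfl

lemma IAP3_step {G : Type*} [AddCommGroup G] (a0 a1 a2 d0 d1 d2 : G) (j : ℤ) :
    IAP3 a0 a1 a2 d0 d1 d2 j + IAP3 a0 a1 a2 d0 d1 d2 (j+1)
      = IAP3 (a0+a1) (a1+a2) (a0+a2+d0) (d0+d1) (d1+d2) (d0+d2) j := by
  have h3 : j % 3 = 0 ∨ j % 3 = 1 ∨ j % 3 = 2 := by omega
  rcases h3 with h | h | h
  · have h1 : (j+1) % 3 = 1 := by omega
    have h2 : (j+1) / 3 = j / 3 := by omega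
    simp only [IAP3, h, h1, h2]
    norm_num [smul_add]
    abel
  · have h1 : (j+1) % 3 = 2 := by omega
    have h2 : (j+1) / 3 = j / 3 := by omega
    simp only [IAP3, h, h1, h2]
    norm_num [smul_add]
    abel
  · have h1 : (j+1) % 3 = 0 := by omega
    have h2 : (j+1) / 3 = j / 3 + 1 := by omega
    simp only [IAP3, h, h1, h2]
    norm_num [smul_add, add_smul]
    abel

lemma mul_IAP3 {n : ℕ} (c a0 a1 a2 d0 d1 d2 : ZMod n) (j : ℤ) :
    c * IAP3 a0 a1 a2 d0 d1 d2 j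
      = IAP3 (c*a0) (c*a1) (c*a2) (c*d0) (c*d1) (c*d2) j := by
  unfold IAP3
  split_ifs <;> simp [mul_add, zsmul_eq_mul] <;> ring

theorem stmt12 (n : ℕ) (hn : Odd n) (d a : ZMod n) (hd : IsUnit d) (S : ℤ → ZMod n)
    (hS : S = IAP3 a (-d) (d - a) d (-(2 * d)) d) :
    (∀ i : ℕ, orbit S (3 * i) = fun j => (-1 : ZMod n) ^ i *
        IAP3 (a - (i : ZMod n) * d) (-(((i : ZMod n) + 1) * d))
          ((2 * (i : ZMod n) + 1) * d - a) d (-(2 * d)) d j) ∧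
    (∀ i : ℕ, orbit S (3 * i + 1) = fun j => (-1 : ZMod n) ^ i *
        IAP3 (a - (2 * (i : ZMod n) + 1) * d) ((i : ZMod n) * d - a)
          (((i : ZMod n) + 2) * d) (-d) (-d) (2 * d) j) ∧
    (∀ i : ℕ, orbit S (3 * i + 2) = fun j => (-1 : ZMod n) ^ i *
        IAP3 (-(((i : ZMod n) + 1) * d)) ((2 * (i : ZMod n) + 2) * d - a)
          (a - (i : ZMod n) * d) (-(2 * d)) d d j) ∧
    (orbit S (3 * n) = fun j => - S j) := by
  -- one derivation step on a scaled IAP3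
  have key : ∀ i : ℕ, orbit S (3 * i) = fun j => (-1 : ZMod n) ^ i *
      IAP3 (a - (i : ZMod n) * d) (-(((i : ZMod n) + 1) * d))
        ((2 * (i : ZMod n) + 1) * d - a) d (-(2 * d)) d j := by
    intro i
    induction i with
    | zero =>
      rw [show 3 * 0 = 0 from rfl, show orbit S 0 = S from rfl, hS]
      funext j
      rw [IAP3_congr (b0 := a) (b1 := -d) (b2 := d - a) (e0 := d) (e1 := -(2*d)) (e2 := d)
        (by push_cast; ring) (by push_cast; ring) (by push_cast; ring) rfl rfl rfl]
      simp
    | succ i ih =>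
      have e1 : orbit S (3 * i + 1) = fun j => orbit S (3 * i) j + orbit S (3 * i) (j+1) := rfl
      have h1 : orbit S (3 * i + 1) = fun j => (-1 : ZMod n) ^ i *
          IAP3 (a - (2 * (i : ZMod n) + 1) * d) ((i : ZMod n) * d - a)
            (((i : ZMod n) + 2) * d) (-d) (-d) (2 * d) j := by
        rw [e1, ih]; funext j
        rw [← mul_add, IAP3_step]
        congr 1
        refine congrFun (IAP3_congr ?_ ?_ ?_ ?_ ?_ ?_) j <;> ring
      have h2 : orbit S (3 * i + 2) = fun j => (-1 : ZMod n) ^ i *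
          IAP3 (-(((i : ZMod n) + 1) * d)) ((2 * (i : ZMod n) + 2) * d - a)
            (a - (i : ZMod n) * d) (-(2 * d)) d d j := by
        rw [show orbit S (3 * i + 2)
            = fun j => orbit S (3 * i + 1) j + orbit S (3 * i + 1) (j+1) from rfl, h1]
        funext j
        rw [← mul_add, IAP3_step]
        congr 1
        refine congrFun (IAP3_congr ?_ ?_ ?_ ?_ ?_ ?_) j <;> ring
      rw [show 3 * (i + 1) = (3 * i + 2) + 1 from by ring,
        show orbit S ((3 * i + 2) + 1)
          = fun j => orbit S (3 * i + 2) j + orbit S (3 * i + 2) (j+1) from rfl, h2]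
      funext j
      rw [← mul_add, IAP3_step, pow_succ, mul_assoc, mul_IAP3, mul_IAP3, mul_IAP3]
      refine congrFun (IAP3_congr ?_ ?_ ?_ ?_ ?_ ?_) j <;> push_cast <;> ring
  have key1 : ∀ i : ℕ, orbit S (3 * i + 1) = fun j => (-1 : ZMod n) ^ i *
      IAP3 (a - (2 * (i : ZMod n) + 1) * d) ((i : ZMod n) * d - a)
        (((i : ZMod n) + 2) * d) (-d) (-d) (2 * d) j := by
    intro i
    rw [show orbit S (3 * i + 1)
        = fun j => orbit S (3 * i) j + orbit S (3 * i) (j+1) from rfl, key i]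
    funext j
    rw [← mul_add, IAP3_step]
    congr 1
    refine congrFun (IAP3_congr ?_ ?_ ?_ ?_ ?_ ?_) j <;> ring
  have key2 : ∀ i : ℕ, orbit S (3 * i + 2) = fun j => (-1 : ZMod n) ^ i *
      IAP3 (-(((i : ZMod n) + 1) * d)) ((2 * (i : ZMod n) + 2) * d - a)
        (a - (i : ZMod n) * d) (-(2 * d)) d d j := by
    intro i
    rw [show orbit S (3 * i + 2)
        = fun j => orbit S (3 * i + 1) j + orbit S (3 * i + 1) (j+1) from rfl, key1 i]
    funext j
    rw [← mul_add, IAP3_step]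
    congr 1
    refine congrFun (IAP3_congr ?_ ?_ ?_ ?_ ?_ ?_) j <;> ring
  refine ⟨key, key1, key2, ?_⟩
  rw [key n]
  funext j
  rw [ZMod.natCast_self, hn.neg_one_pow, hS,
    IAP3_congr (b0 := a) (b1 := -d) (b2 := d - a) (e0 := d) (e1 := -(2*d)) (e2 := d)
      (by ring) (by ring) (by ring) rfl rfl rfl, neg_one_mul]
end

section
/- Let n and k be positive integers with k not divisible by 6. If S = IAP(A,D) is a k-interlaced arithmetic progression of integers whose orbit (under a_{i+1,j} = a_{i,j} + a_{i,j+1}) is (k,k)-interlaced doubly arithmetic, then S is the zero sequence. -/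
/-!
The orbit is generated by `1 + T`, where `T` is the shift `x ↦ x + 1` on sequences. A sequence
`v` with `T^k v = v` and `(1 + T)^k v = v` vanishes, because `X^k - 1` and `(1 + X)^k - 1` are
coprime: a common complex root `z` has `|z| = |1 + z| = 1`, so it is a primitive cube root of unity,
and then `(1 + z)^k = (-1)^k` forces `6 ∣ k`.

The rows `i0 = 0` of the hypothesis make `U := orbit S k - S` periodic and
fixed by `(1 + T)^k`, so `U = 0`; then the same holds for `S (· + k) - S`, and finally for `S`.
-/

def IAP {G : Type*} [AddCommGroup G] (k : ℕ) (A D : ℕ → G) : ℤ → G :=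
  fun j => A (j % (k : ℤ)).toNat + (j / (k : ℤ)) • D (j % (k : ℤ)).toNat

open Polynomial

lemma six_dvd_of_pow_eq_one_of_one_add_pow_eq_one {k : ℕ} (hk : k ≠ 0) {z : ℂ}
    (hz : z ^ k = 1) (hz' : (1 + z) ^ k = 1) : 6 ∣ k := by
  have hsq : z.re ^ 2 + z.im ^ 2 = 1 ∧ (1 + z.re) ^ 2 + z.im ^ 2 = 1 := by
    have h := Complex.norm_eq_one_of_pow_eq_one hz hk
    have h' := Complex.norm_eq_one_of_pow_eq_one hz' hk
    replace h : Complex.normSq z = 1 := by rw [Complex.normSq_eq_norm_sq, h, one_pow]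
    replace h' : Complex.normSq (1 + z) = 1 := by rw [Complex.normSq_eq_norm_sq, h', one_pow]
    rw [Complex.normSq_apply] at h h'
    simp only [Complex.add_re, Complex.add_im, Complex.one_re, Complex.one_im, zero_add] at h'
    constructor <;> linarith
  have hre : z.re = -1 / 2 := by nlinarith
  have hcube : z ^ 2 + z + 1 = 0 := by
    apply Complex.ext <;> simp [pow_two, hre] <;> nlinarith
  have h3 : 3 ∣ k := by
    have hord : orderOf z = 3 :=
      orderOf_eq_prime (by linear_combination (z - 1) * hcube) (by rintro rfl; norm_num at hre)
    exact hord ▸ orderOf_dvd_of_pow_eq_one hz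
  have h2 : 2 ∣ k := by
    have hneg : (-1 : ℂ) ^ k = 1 := by
      rwa [show 1 + z = -1 * z ^ 2 by linear_combination hcube, mul_pow, ← pow_mul,
        mul_comm 2, pow_mul, hz, one_pow, mul_one] at hz'
    exact (neg_one_pow_eq_one_iff_even (by norm_num)).1 hneg |>.two_dvd
  omega

lemma isCoprime_one_add_X_pow_sub_one {k : ℕ} (hk : k ≠ 0) (h6 : ¬ 6 ∣ k) :
    IsCoprime ((1 + X) ^ k - 1 : ℚ[X]) (X ^ k - 1) := by
  rw [isCoprime_iff_aeval_ne_zero_of_isAlgClosed ℚ ℂ]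
  intro z
  by_contra! h
  simp only [map_sub, map_pow, map_add, map_one, aeval_X, sub_eq_zero] at h
  exact h6 (six_dvd_of_pow_eq_one_of_one_add_pow_eq_one hk h.2 h.1)

lemma forall_int_of_forall_natCast_add_mul {k : ℕ} (hk : 0 < k) {P : ℤ → Prop}
    (h : ∀ j0 < k, ∀ j : ℤ, P (j0 + j * k)) (x : ℤ) : P x := by
  have hk' : (0 : ℤ) < k := by exact_mod_cast hk
  have hmod := Int.emod_nonneg x hk'.ne'
  have hlt := Int.emod_lt_of_pos x hk'
  have hx := h (x % k).toNat (by omega) (x / k)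
  rwa [Int.toNat_of_nonneg hmod, Int.emod_add_ediv_mul] at hx

section orbit

variable {G : Type*} [AddCommGroup G]

lemma orbit_sub (S S' : ℤ → G) (n : ℕ) : orbit (S - S') n = orbit S n - orbit S' n := by
  induction n with
  | zero => rfl
  | succ n ih => funext x; simp only [orbit, ih, Pi.sub_apply]; abel

lemma orbit_comp_add_right (S : ℤ → G) (c : ℤ) (n : ℕ) :
    orbit (fun x => S (x + c)) n = fun x => orbit S n (x + c) := by
  induction n with
  | zero => rfl
  | succ n ih => funext x; simp only [orbit, ih, add_right_comm x 1 c]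

lemma orbit_add (S : ℤ → G) (m n : ℕ) : orbit S (m + n) = orbit (orbit S m) n := by
  induction n with
  | zero => rfl
  | succ n ih => rw [← Nat.add_assoc]; funext x; simp only [orbit, ih]

lemma orbit_comp {H : Type*} [AddCommGroup H] (f : G →+ H) (S : ℤ → G) (n : ℕ) :
    orbit (f ∘ S) n = f ∘ orbit S n := by
  induction n with
  | zero => rfl
  | succ n ih => funext x; simp only [orbit, ih, Function.comp_apply, map_add]

lemma funLeft_add_one_pow_apply (R : Type*) [Semiring R] [Module R G] (S : ℤ → G) (n : ℕ) :
    (LinearMap.funLeft R G (· + 1) ^ n) S = fun x => S (x + n) := by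
  induction n with
  | zero => simp
  | succ n ih =>
    funext x
    rw [pow_succ', Module.End.mul_apply, ih, LinearMap.funLeft_apply]
    push_cast
    rw [add_assoc, add_comm 1]

lemma orbit_eq_one_add_funLeft_pow_apply (R : Type*) [Semiring R] [Module R G] (S : ℤ → G)
    (n : ℕ) :
    orbit S n = ((1 + LinearMap.funLeft R G (· + (1 : ℤ)) : Module.End R (ℤ → G)) ^ n) S := by
  induction n with
  | zero => rfl
  | succ n ih =>
    rw [pow_succ', Module.End.mul_apply, ← ih]
    rfl

end orbit

lemma eq_zero_of_periodic_of_orbit_eq {M : Type*} [AddCommGroup M] [Module ℚ M] {k : ℕ}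
    (hk : k ≠ 0) (h6 : ¬ 6 ∣ k) {v : ℤ → M} (hper : Function.Periodic v k)
    (horb : orbit v k = v) : v = 0 := by
  refine (Submodule.disjoint_def.1 (disjoint_ker_aeval_of_isCoprime
    (LinearMap.funLeft ℚ M (· + (1 : ℤ))) (isCoprime_one_add_X_pow_sub_one hk h6))) v ?_ ?_
  · simp [LinearMap.mem_ker, ← orbit_eq_one_add_funLeft_pow_apply, horb]
  · simp [LinearMap.mem_ker, funLeft_add_one_pow_apply, hper.funext]

lemma Int.eq_zero_of_periodic_of_orbit_eq {k : ℕ} (hk : k ≠ 0) (h6 : ¬ 6 ∣ k) {v : ℤ → ℤ}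
    (hper : Function.Periodic v k) (horb : orbit v k = v) : v = 0 := by
  have hcast : ⇑(Int.castAddHom ℚ) ∘ v = 0 := by
    apply _root_.eq_zero_of_periodic_of_orbit_eq hk h6 (hper.comp _)
    rw [orbit_comp, horb]
  funext x
  simpa using congrFun hcast x

lemma eq_zero_of_orbit_eq_of_periodic_sub {k : ℕ} (hk : k ≠ 0) (h6 : ¬ 6 ∣ k) {S : ℤ → ℤ}
    (horb : orbit S k = S) (hper : Function.Periodic (fun x => S (x + k) - S x) k) : S = 0 := by
  have hdiff : (fun x => S (x + k)) - S = 0 := by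
    refine Int.eq_zero_of_periodic_of_orbit_eq hk h6 hper ?_
    rw [orbit_sub, orbit_comp_add_right, horb]
  refine Int.eq_zero_of_periodic_of_orbit_eq hk h6 (fun x => ?_) horb
  simpa [sub_eq_zero] using congrFun hdiff x

lemma eq_zero_of_orbit_mul_eq {k : ℕ} (hk : 0 < k) (h6 : ¬ 6 ∣ k) {S : ℤ → ℤ}
    (h : ∀ j0 < k, ∀ (i : ℕ) (j : ℤ), orbit S (i * k) (j0 + j * k) =
      S j0 + i * (orbit S k j0 - S j0) + j * (S (j0 + k) - S j0)) : S = 0 := by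
  have h0 : ∀ j0 < k, ∀ j : ℤ, S (j0 + j * k) = S j0 + j * (S (j0 + k) - S j0) := by
    intro j0 hj0 j; simpa [orbit] using h j0 hj0 0 j
  have h1 : ∀ j0 < k, ∀ j : ℤ,
      orbit S k (j0 + j * k) = orbit S k j0 + j * (S (j0 + k) - S j0) := by
    intro j0 hj0 j; simpa using h j0 hj0 1 j
  have h2 : ∀ j0 < k, ∀ j : ℤ, orbit S (k + k) (j0 + j * k) =
      2 * orbit S k j0 - S j0 + j * (S (j0 + k) - S j0) := by
    intro j0 hj0 j
    have h2 := h j0 hj0 2 j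
    rw [two_mul] at h2
    push_cast at h2
    linear_combination h2
  have hstep : ∀ j0 : ℕ, ∀ j : ℤ, (j0 : ℤ) + j * k + k = j0 + (j + 1) * k := fun _ _ => by ring
  have horb : orbit S k = S := by
    rw [← sub_eq_zero]
    refine Int.eq_zero_of_periodic_of_orbit_eq hk.ne' h6 ?_ ?_
    · refine forall_int_of_forall_natCast_add_mul hk fun j0 hj0 j => ?_
      simp only [Pi.sub_apply, hstep, h0 j0 hj0, h1 j0 hj0]
      ring
    · rw [orbit_sub, ← orbit_add]
      refine funext (forall_int_of_forall_natCast_add_mul hk fun j0 hj0 j => ?_)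
      simp only [Pi.sub_apply, h0 j0 hj0, h1 j0 hj0, h2 j0 hj0]
      ring
  refine eq_zero_of_orbit_eq_of_periodic_sub hk.ne' h6 horb
    (forall_int_of_forall_natCast_add_mul hk fun j0 hj0 j => ?_)
  simp only [hstep, add_assoc, h0 j0 hj0]
  ring

theorem stmt18 (k : ℕ) (hk : 0 < k) (h6 : ¬ (6 ∣ k)) (A D : ℕ → ℤ)
    (hIDA : ∀ i0 < k, ∀ j0 < k, ∀ (i : ℕ) (j : ℤ),
      orbit (IAP k A D) (i0 + i * k) ((j0 : ℤ) + j * k) =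
        orbit (IAP k A D) i0 (j0 : ℤ)
          + (i : ℤ) * (orbit (IAP k A D) (i0 + k) (j0 : ℤ) - orbit (IAP k A D) i0 (j0 : ℤ))
          + j * (orbit (IAP k A D) i0 ((j0 : ℤ) + k) - orbit (IAP k A D) i0 (j0 : ℤ))) :
    ∀ j : ℤ, IAP k A D j = 0 :=
  congrFun <| eq_zero_of_orbit_mul_eq hk h6 fun j0 hj0 i j => by
    simpa [orbit] using hIDA 0 hk j0 hj0 i j
end
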